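/- Let A₊(ξ) = (3/4)(-1+4ξ+20ξ²), A₋(ξ) = (3/4)(-1-4ξ+20ξ²), A₀(ξ) = 1 be the symmetric (α = 0) one-dimensional biorthogonal test functions on [-1/2,1/2], and define tensor test functions Ã_{r,s}(ξ,η) = A_r(ξ)A_s(η). Let α₁, α₂, α₃ ∈ ℝ. Then the function A_{+½,0} = ((8α₁ - 1 - α₃)/2) Ã_{+½,+½} + (3(1+α₃)/2) Ã_{+½,0} + ((8α₂ - 1 - α₃)/2) Ã_{+½,-½} satisfies: ∬ A_{+½,0} B dξdη = 0 for B ∈ {B₀, B_{-½,0}, B_{0,+½}, B_{0,-½}, B_{-½,+½}, B_{-½,-½}}, ∬ A_{+½,0} B_{+½,+½} = α₁, ∬ A_{+½,0} B_{+½,-½} = α₂, and ∬ A_{+½,0} B_{+½,0} = (1+α₃)/2, where all integrals are over [-1/2,1/2]² and the B's are the biparabolic 2-d Active Flux basis functions. -/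

import Mathlib

/-!
Every function involved is biquadratic, so both the edge test function and each of the nine
2-d basis functions expand in tensor products of the 1-d test functions `A₋, A₀, A₊` and of
the 1-d basis functions `B₋, B₀, B₊` respectively. The 1-d families are biorthogonal with
weights `1/2, 1, 1/2`; since the double integral of a tensor product is the product of the 1-d
integrals, the tensor products are biorthogonal with the product weights, and each double integral
reduces to a weighted dot product of two coefficient matrices.
-/

open intervalIntegral

theorem integral_integral_sum_mul {ι : Type*} (s : Finset ι) {a b : ℝ} (f g : ι → ℝ → ℝ)
    (hf : ∀ i, Continuous (f i)) (hg : ∀ i, Continuous (g i)) :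
    ∫ ξ in a..b, ∫ η in a..b, ∑ i ∈ s, f i ξ * g i η =
      ∑ i ∈ s, (∫ ξ in a..b, f i ξ) * ∫ η in a..b, g i η := by
  have inner (ξ : ℝ) :
      ∫ η in a..b, ∑ i ∈ s, f i ξ * g i η = ∑ i ∈ s, f i ξ * ∫ η in a..b, g i η := by
    rw [integral_finsetSum fun i _ => ((hg i).const_mul (f i ξ)).intervalIntegrable a b]
    simp only [integral_const_mul]
  simp only [inner]
  rw [integral_finsetSum fun i _ =>
    ((hf i).mul_const (∫ η in a..b, g i η)).intervalIntegrable a b]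
  simp only [integral_mul_const]

section Tensor

variable {ι : Type*} [Fintype ι]

def tensorCombination (c : Matrix ι ι ℝ) (u : ι → ℝ → ℝ) (ξ η : ℝ) : ℝ :=
  ∑ i, ∑ j, c i j * (u i ξ * u j η)

theorem tensorCombination_mul_tensorCombination (c d : Matrix ι ι ℝ) (u v : ι → ℝ → ℝ)
    (ξ η : ℝ) :
    tensorCombination c u ξ η * tensorCombination d v ξ η =
      ∑ p : (ι × ι) × (ι × ι), c p.1.1 p.1.2 * d p.2.1 p.2.2 * (u p.1.1 ξ * v p.2.1 ξ) *
        (u p.1.2 η * v p.2.2 η) := by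
  simp only [tensorCombination, Finset.sum_mul]
  simp only [Finset.mul_sum, Fintype.sum_prod_type]
  refine Finset.sum_congr rfl fun i _ => Finset.sum_congr rfl fun j _ =>
    Finset.sum_congr rfl fun k _ => Finset.sum_congr rfl fun l _ => ?_
  ring

theorem integral_integral_tensorCombination_mul_tensorCombination [DecidableEq ι] {a b : ℝ}
    {u v : ι → ℝ → ℝ} {w : ι → ℝ} (hu : ∀ i, Continuous (u i)) (hv : ∀ i, Continuous (v i))
    (huv : ∀ i j, ∫ x in a..b, u i x * v j x = if i = j then w i else 0) (c d : Matrix ι ι ℝ) :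
    ∫ ξ in a..b, ∫ η in a..b, tensorCombination c u ξ η * tensorCombination d v ξ η =
      ∑ i, ∑ j, c i j * d i j * (w i * w j) := by
  simp only [tensorCombination_mul_tensorCombination]
  rw [integral_integral_sum_mul]
  · simp only [integral_const_mul, huv, Fintype.sum_prod_type, mul_ite, mul_assoc, mul_zero,
      ite_mul, zero_mul, Finset.sum_ite_eq, Finset.mem_univ, ↓reduceIte]
  · exact fun _ => continuous_const.mul ((hu _).mul (hv _))
  · exact fun _ => (hu _).mul (hv _)

end Tensor

noncomputable section

def quadratic (a : Fin 3 → ℝ) (x : ℝ) : ℝ := a 0 + a 1 * x + a 2 * x ^ 2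

theorem continuous_quadratic (a : Fin 3 → ℝ) : Continuous (quadratic a) := by
  unfold quadratic
  fun_prop

theorem integral_quadratic_mul_quadratic (a b : Fin 3 → ℝ) :
    ∫ x in (-(1/2 : ℝ))..(1/2), quadratic a x * quadratic b x =
      a 0 * b 0 + (a 0 * b 2 + a 1 * b 1 + a 2 * b 0) / 12 + a 2 * b 2 / 80 := by
  have expand (x : ℝ) : quadratic a x * quadratic b x =
      x ^ 4 * (a 2 * b 2) + x ^ 3 * (a 1 * b 2 + a 2 * b 1) +
        x ^ 2 * (a 0 * b 2 + a 1 * b 1 + a 2 * b 0) + x * (a 0 * b 1 + a 1 * b 0) + a 0 * b 0 := by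
    unfold quadratic
    ring
  simp (disch := exact Continuous.intervalIntegrable (by fun_prop) _ _) only [expand,
    integral_add, integral_mul_const, integral_pow, integral_id, integral_const]
  norm_num
  ring

namespace ActiveFlux

-- Index `0, 1, 2` stands for `-½, 0, +½`; row `i` lists the monomial coefficients of the
-- `i`-th function, e.g. `B₊ = (2ξ+1)(6ξ-1)/4 = -1/4 + ξ + 3ξ²`.
def basis (i : Fin 3) : ℝ → ℝ := quadratic (!![-1/4, -1, 3; 3/2, 0, -6; -1/4, 1, 3] i)

def test (i : Fin 3) : ℝ → ℝ := quadratic (!![-3/4, -3, 15; 1, 0, 0; -3/4, 3, 15] i)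

def weight : Fin 3 → ℝ := ![1/2, 1, 1/2]

theorem integral_test_mul_basis (i j : Fin 3) :
    ∫ ξ in (-(1/2 : ℝ))..(1/2), test i ξ * basis j ξ = if i = j then weight i else 0 := by
  simp only [test, basis, integral_quadratic_mul_quadratic]
  fin_cases i <;> fin_cases j <;>
    norm_num [weight, Matrix.cons_val_two, Matrix.tail_cons, Matrix.head_cons]

theorem integral_integral_tensorCombination_test_mul_basis (c d : Matrix (Fin 3) (Fin 3) ℝ) :
    ∫ ξ in (-(1/2 : ℝ))..(1/2), ∫ η in (-(1/2 : ℝ))..(1/2),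
      tensorCombination c test ξ η * tensorCombination d basis ξ η =
        ∑ i, ∑ j, c i j * d i j * (weight i * weight j) :=
  integral_integral_tensorCombination_mul_tensorCombination (fun _ => continuous_quadratic _)
    (fun _ => continuous_quadratic _) integral_test_mul_basis c d

end ActiveFlux

end

theorem stmt_16 (α₁ α₂ α₃ : ℝ)
    (Ap Am A0 : ℝ → ℝ)
    (hAp : ∀ ξ, Ap ξ = 3/4 * (-1 + 4*ξ + 20*ξ^2))
    (hAm : ∀ ξ, Am ξ = 3/4 * (-1 - 4*ξ + 20*ξ^2))
    (hA0 : ∀ ξ, A0 ξ = 1)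
    (Ap0 : ℝ → ℝ → ℝ)
    (hAp0 : ∀ ξ η, Ap0 ξ η =
      (8*α₁ - 1 - α₃)/2 * (Ap ξ * Ap η) +
      3*(1 + α₃)/2 * (Ap ξ * A0 η) +
      (8*α₂ - 1 - α₃)/2 * (Ap ξ * Am η))
    (Bpp Bmp Bmm Bpm Bp0 Bm0 B0p B0m B00 : ℝ → ℝ → ℝ)
    (hBpp : ∀ ξ η, Bpp ξ η = 1/16 * (2*ξ+1) * (2*η+1) * (-1 + 2*η + 2*ξ + 12*ξ*η))
    (hBmp : ∀ ξ η, Bmp ξ η = 1/16 * (2*ξ-1) * (2*η+1) * (1 - 2*η + 2*ξ + 12*ξ*η))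
    (hBmm : ∀ ξ η, Bmm ξ η = 1/16 * (2*ξ-1) * (2*η-1) * (-1 - 2*η - 2*ξ + 12*ξ*η))
    (hBpm : ∀ ξ η, Bpm ξ η = 1/16 * (2*ξ+1) * (2*η-1) * (1 + 2*η - 2*ξ + 12*ξ*η))
    (hBp0 : ∀ ξ η, Bp0 ξ η = -(1/4) * (2*ξ+1) * (6*ξ-1) * (4*η^2 - 1))
    (hBm0 : ∀ ξ η, Bm0 ξ η = -(1/4) * (2*ξ-1) * (6*ξ+1) * (4*η^2 - 1))
    (hB0p : ∀ ξ η, B0p ξ η = -(1/4) * (4*ξ^2 - 1) * (2*η+1) * (6*η-1))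
    (hB0m : ∀ ξ η, B0m ξ η = -(1/4) * (4*ξ^2 - 1) * (2*η-1) * (6*η+1))
    (hB00 : ∀ ξ η, B00 ξ η = 9/4 * (4*ξ^2 - 1) * (4*η^2 - 1)) :
    (∫ ξ in (-(1/2 : ℝ))..(1/2), ∫ η in (-(1/2 : ℝ))..(1/2), Ap0 ξ η * B00 ξ η) = 0 ∧
    (∫ ξ in (-(1/2 : ℝ))..(1/2), ∫ η in (-(1/2 : ℝ))..(1/2), Ap0 ξ η * Bm0 ξ η) = 0 ∧
    (∫ ξ in (-(1/2 : ℝ))..(1/2), ∫ η in (-(1/2 : ℝ))..(1/2), Ap0 ξ η * B0p ξ η) = 0 ∧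
    (∫ ξ in (-(1/2 : ℝ))..(1/2), ∫ η in (-(1/2 : ℝ))..(1/2), Ap0 ξ η * B0m ξ η) = 0 ∧
    (∫ ξ in (-(1/2 : ℝ))..(1/2), ∫ η in (-(1/2 : ℝ))..(1/2), Ap0 ξ η * Bmp ξ η) = 0 ∧
    (∫ ξ in (-(1/2 : ℝ))..(1/2), ∫ η in (-(1/2 : ℝ))..(1/2), Ap0 ξ η * Bmm ξ η) = 0 ∧
    (∫ ξ in (-(1/2 : ℝ))..(1/2), ∫ η in (-(1/2 : ℝ))..(1/2), Ap0 ξ η * Bpp ξ η) = α₁ ∧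
    (∫ ξ in (-(1/2 : ℝ))..(1/2), ∫ η in (-(1/2 : ℝ))..(1/2), Ap0 ξ η * Bpm ξ η) = α₂ ∧
    (∫ ξ in (-(1/2 : ℝ))..(1/2), ∫ η in (-(1/2 : ℝ))..(1/2), Ap0 ξ η * Bp0 ξ η) = (1 + α₃)/2 := by
  have hA : ∀ ξ η, Ap0 ξ η = tensorCombination
      !![0, 0, 0; 0, 0, 0; (8*α₂ - 1 - α₃)/2, 3*(1 + α₃)/2, (8*α₁ - 1 - α₃)/2]
      ActiveFlux.test ξ η := by
    intro ξ η
    simp only [hAp0, hAp, hAm, hA0, tensorCombination, Fin.sum_univ_three, ActiveFlux.test,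
      quadratic, Matrix.of_apply, Matrix.cons_val]
    ring
  have pairing (B : ℝ → ℝ → ℝ) (β : Matrix (Fin 3) (Fin 3) ℝ)
      (hB : ∀ ξ η, B ξ η = tensorCombination β ActiveFlux.basis ξ η) :
      ∫ ξ in (-(1/2 : ℝ))..(1/2), ∫ η in (-(1/2 : ℝ))..(1/2), Ap0 ξ η * B ξ η =
        ((8*α₂ - 1 - α₃)/2 * β 2 0 / 2 + 3*(1 + α₃)/2 * β 2 1 +
          (8*α₁ - 1 - α₃)/2 * β 2 2 / 2) / 2 := by
    simp only [hA, hB, ActiveFlux.integral_integral_tensorCombination_test_mul_basis,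
      Fin.sum_univ_three, ActiveFlux.weight, Matrix.of_apply, Matrix.cons_val]
    ring
  -- Entry `(r, s)` is the degree of freedom `r` in `ξ` and `s` in `η` of the basis function:
  -- its value at `-½` (`0`), `+½` (`2`), or its mean over `[-½, ½]` (`1`).
  refine ⟨(pairing B00 !![0, 0, 0; 0, 1, 0; 0, 0, 0] ?_).trans ?_,
    (pairing Bm0 !![0, 2/3, 0; 0, 0, 0; 0, 0, 0] ?_).trans ?_,
    (pairing B0p !![0, 0, 0; 0, 0, 2/3; 0, 0, 0] ?_).trans ?_,
    (pairing B0m !![0, 0, 0; 2/3, 0, 0; 0, 0, 0] ?_).trans ?_,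
    (pairing Bmp !![0, 1/6, 1; 0, 0, 1/6; 0, 0, 0] ?_).trans ?_,
    (pairing Bmm !![1, 1/6, 0; 1/6, 0, 0; 0, 0, 0] ?_).trans ?_,
    (pairing Bpp !![0, 0, 0; 0, 0, 1/6; 0, 1/6, 1] ?_).trans ?_,
    (pairing Bpm !![0, 0, 0; 1/6, 0, 0; 1, 1/6, 0] ?_).trans ?_,
    (pairing Bp0 !![0, 0, 0; 0, 0, 0; 0, 2/3, 0] ?_).trans ?_⟩
  all_goals first
    | intro ξ η
      simp only [hBpp, hBmp, hBmm, hBpm, hBp0, hBm0, hB0p, hB0m, hB00, tensorCombination,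
        Fin.sum_univ_three, ActiveFlux.basis, quadratic, Matrix.of_apply, Matrix.cons_val]
      ring
    | simp only [Matrix.of_apply, Matrix.cons_val]
      ring
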